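/- Let X be a d-mode tensor in ℝ^{I₁×⋯×I_d}, let A_j ∈ ℝ^{I_j×k_j} have orthonormal columns for j = 1,…,d, and define the intermediate tensors X^{(0)} = X and X^{(j)} = X ×₁ A₁A₁ᵀ ⋯ ×_j A_jA_jᵀ for j = 1,…,d. Then ‖X − X^{(d)}‖_F² = Σ_{j=1}^d ‖X^{(j−1)} − X^{(j)}‖_F². Consequently, if ε > 0 and ‖X^{(j−1)} − X^{(j)}‖_F ≤ (ε/√d) ‖X‖_F for each j = 1,…,d, then ‖X − X^{(d)}‖_F ≤ ε ‖X‖_F. -/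
import Mathlib


open MeasureTheory ProbabilityTheory BigOperators Matrix

noncomputable section

/-- A `d`-mode tensor with dimensions `I 0 × ⋯ × I (d-1)`. -/
abbrev Tensor (d : ℕ) (I : Fin d → ℕ) : Type := (∀ j, Fin (I j)) → ℝ

namespace Tensor

variable {d : ℕ} {I J : Fin d → ℕ}

/-- Square of the Frobenius norm of a tensor. -/
def frobSq (X : Tensor d I) : ℝ := ∑ i, (X i) ^ 2

/-- Frobenius norm of a tensor. -/
def frobNorm (X : Tensor d I) : ℝ := Real.sqrt (frobSq X)

/-- Mode-`j` product of a tensor with a square matrix `A ∈ ℝ^{I_j × I_j}`. -/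
def modeMul (X : Tensor d I) (j : Fin d) (A : Matrix (Fin (I j)) (Fin (I j)) ℝ) :
    Tensor d I :=
  fun i => ∑ k, A (i j) k * X (Function.update i j k)

/-- `modeMulFirst X A t = X ×₁ A₁ ×₂ A₂ ⋯ ×ₜ Aₜ` (the first `t` modes, square matrices). -/
def modeMulFirst (X : Tensor d I) (A : ∀ j, Matrix (Fin (I j)) (Fin (I j)) ℝ) : ℕ → Tensor d I
  | 0 => X
  | t + 1 =>
    if h : t < d then modeMul (modeMulFirst X A t) ⟨t, h⟩ (A ⟨t, h⟩)
    else modeMulFirst X A t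

/-- Simultaneous mode product in every mode: `multiMul G A = G ×₁ A₁ ⋯ ×_d A_d`,
where `A j ∈ ℝ^{I_j × J_j}` and `G` has dimensions `J`. -/
def multiMul (G : Tensor d J) (A : ∀ j, Matrix (Fin (I j)) (Fin (J j)) ℝ) : Tensor d I :=
  fun i => ∑ k : ∀ j, Fin (J j), (∏ j, A j (i j) (k j)) * G k

/-- Mode-`j` unfolding of a tensor, as a matrix with rows indexed by `Fin (I j)` and
columns indexed by the remaining modes. -/
def unfold (X : Tensor d I) (j : Fin d) :
    Matrix (Fin (I j)) (∀ k : {k : Fin d // k ≠ j}, Fin (I k.1)) ℝ :=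
  Matrix.of fun a b => X fun k => if h : k = j then Fin.cast (congrArg I h.symm) a else b ⟨k, h⟩

end Tensor

/-- `singularValues A i` is the `(i+1)`-st largest singular value of `A`
(0-based indexing; `0` when `i` exceeds the number of rows). -/
def singularValues {m n : Type*} [Fintype m] [Fintype n] [DecidableEq m]
    (A : Matrix m n ℝ) : ℕ → ℝ := fun i =>
  if h : i < Fintype.card m then
    let ev : Fin (Fintype.card m) → ℝ :=
      (Matrix.isHermitian_mul_conjTranspose_self A).eigenvalues ∘ (Fintype.equivFin m).symm
    Real.sqrt ((ev ∘ Tuple.sort ev) ⟨Fintype.card m - 1 - i, by omega⟩)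
  else 0

/-- Spectral norm (largest singular value). -/
def specNorm {m n : Type*} [Fintype m] [Fintype n] [DecidableEq m]
    (A : Matrix m n ℝ) : ℝ := singularValues A 0

/-- Square of the Frobenius norm of a matrix. -/
def matFrobSq {m n : Type*} [Fintype m] [Fintype n] (M : Matrix m n ℝ) : ℝ :=
  ∑ i, ∑ j, (M i j) ^ 2

/-- Frobenius norm of a matrix. -/
def matFrobNorm {m n : Type*} [Fintype m] [Fintype n] (M : Matrix m n ℝ) : ℝ :=
  Real.sqrt (matFrobSq M)

/-- A rectangular "diagonal" matrix with entries `s 0, s 1, …` placed along the diagonal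
determined by the chosen enumerations of the index types. -/
def diagMat (m n : Type*) [Fintype m] [Fintype n] (s : ℕ → ℝ) : Matrix m n ℝ :=
  Matrix.of fun a b =>
    if (Fintype.equivFin m a : ℕ) = (Fintype.equivFin n b : ℕ) then s (Fintype.equivFin m a)
    else 0

/-- `IsSVD M U s V` : `M = U Σ Vᵀ` is a singular value decomposition of `M`, with `U, V`
orthogonal and the singular values `s` nonnegative and arranged in decreasing order. -/
def IsSVD {m n : Type*} [Fintype m] [Fintype n] [DecidableEq m] [DecidableEq n]
    (M : Matrix m n ℝ) (U : Matrix m m ℝ) (s : ℕ → ℝ) (V : Matrix n n ℝ) : Prop :=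
  Uᵀ * U = 1 ∧ Vᵀ * V = 1 ∧ Antitone s ∧ (∀ i, 0 ≤ s i) ∧
    (∀ i, min (Fintype.card m) (Fintype.card n) ≤ i → s i = 0) ∧
    M = U * diagMat m n s * Vᵀ

/-- `B` is the rank-`r` truncated SVD of `M`: it is obtained from an SVD of `M` by
retaining only the `r` largest singular values. -/
def IsSVDTruncation {m n : Type*} [Fintype m] [Fintype n] [DecidableEq m] [DecidableEq n]
    (M : Matrix m n ℝ) (r : ℕ) (B : Matrix m n ℝ) : Prop :=
  ∃ U s V, IsSVD M U s V ∧ B = U * diagMat m n (fun i => if i < r then s i else 0) * Vᵀ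

/-- `A` consists of the first `r` left singular vectors of `M` (the columns of the
orthogonal factor `U` of an SVD of `M` corresponding to the `r` largest singular values). -/
def IsTopLeftSingVecs {m n : Type*} [Fintype m] [Fintype n] [DecidableEq m] [DecidableEq n]
    (M : Matrix m n ℝ) (r : ℕ) (A : Matrix m (Fin r) ℝ) : Prop :=
  ∃ U s V, IsSVD M U s V ∧ ∃ h : r ≤ Fintype.card m,
    ∀ (a : m) (k : Fin r), A a k = U a ((Fintype.equivFin m).symm (Fin.castLE h k))

/-- Column space of a matrix. -/
def colSpace {m n : Type*} [Fintype n] (M : Matrix m n ℝ) : Submodule ℝ (m → ℝ) :=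
  LinearMap.range M.mulVecLin

/-- `Xopt` is a best multilinear rank-`r` approximation of `X` in the Frobenius norm. -/
def IsBestRankApprox {d : ℕ} {I : Fin d → ℕ} (X : Tensor d I) (r : Fin d → ℕ)
    (Xopt : Tensor d I) : Prop :=
  (∀ j, (Tensor.unfold Xopt j).rank ≤ r j) ∧
    ∀ Y : Tensor d I, (∀ j, (Tensor.unfold Y j).rank ≤ r j) →
      Tensor.frobNorm (X - Xopt) ≤ Tensor.frobNorm (X - Y)

/-- `P` is a selection operator: its columns are distinct columns of the identity matrix. -/
def IsSelection {a b : Type*} [DecidableEq a] (P : Matrix a b ℝ) : Prop :=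
  ∃ f : b → a, Function.Injective f ∧ ∀ i k, P i k = if i = f k then 1 else 0

section STHOSVD

variable {d : ℕ}

/-- Dimensions of the partially truncated core tensor in the STHOSVD with processing
order `[0, 1, …, d-1]`: after processing the first `t` modes, mode `k` has dimension
`r k` for `k < t` and `I k` otherwise. -/
def stDims (I r : Fin d → ℕ) (t : ℕ) : Fin d → ℕ := fun k => if (k : ℕ) < t then r k else I k

theorem stDims_lt {I r : Fin d → ℕ} {t : ℕ} {k : Fin d} (h : (k : ℕ) < t) :
    stDims I r t k = r k := if_pos h

theorem stDims_ge {I r : Fin d → ℕ} {t : ℕ} {k : Fin d} (h : ¬ (k : ℕ) < t) :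
    stDims I r t k = I k := if_neg h

theorem stDims_self {I r : Fin d → ℕ} (j : Fin d) : stDims I r (j : ℕ) j = I j :=
  stDims_ge (lt_irrefl _)

/-- The partially truncated core tensor `G^{(t)} = X ×₁ A₁ᵀ ⋯ ×ₜ Aₜᵀ` of the STHOSVD
(processing order `[0, …, d-1]`). -/
def stCore {I r : Fin d → ℕ} (X : Tensor d I)
    (A : ∀ j, Matrix (Fin (I j)) (Fin (r j)) ℝ) (t : ℕ) : Tensor d (stDims I r t) :=
  Tensor.multiMul X fun k =>
    if h : (k : ℕ) < t then
      Matrix.reindex (finCongr (stDims_lt h).symm) (Equiv.refl _) (A k)ᵀ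
    else Matrix.reindex (finCongr (stDims_ge h).symm) (Equiv.refl _)
      (1 : Matrix (Fin (I k)) (Fin (I k)) ℝ)

/-- The `t`-th partial approximation `X̂^{(t)} = G^{(t)} ×₁ A₁ ⋯ ×ₜ Aₜ` of the STHOSVD. -/
def stPartial {I r : Fin d → ℕ} (X : Tensor d I)
    (A : ∀ j, Matrix (Fin (I j)) (Fin (r j)) ℝ) (t : ℕ) : Tensor d I :=
  Tensor.multiMul (stCore X A t) fun k =>
    if h : (k : ℕ) < t then
      Matrix.reindex (Equiv.refl _) (finCongr (stDims_lt h).symm) (A k)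
    else Matrix.reindex (Equiv.refl _) (finCongr (stDims_ge h).symm)
      (1 : Matrix (Fin (I k)) (Fin (I k)) ℝ)

/-- Column index type for the mode-`j` unfolding of a tensor with dimensions `I`. -/
abbrev colIdx (I : Fin d → ℕ) (j : Fin d) : Type := ∀ k : {k : Fin d // k ≠ j}, Fin (I k.1)

end STHOSVD

/-- Measurable space structure on matrices (entrywise). -/
instance matrixMeasurableSpace (m n : Type*) : MeasurableSpace (Matrix m n ℝ) :=
  inferInstanceAs (MeasurableSpace (m → n → ℝ))

/-- The distribution of a standard Gaussian random matrix: independent `N(0,1)` entries. -/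
def gaussMat (m n : Type*) [Fintype m] [Fintype n] : Measure (Matrix m n ℝ) :=
  (Measure.pi fun _ : m => Measure.pi fun _ : n => gaussianReal 0 1 :
    Measure (m → n → ℝ))

end

noncomputable section

/-- The structure-preserving STHOSVD approximation `X̂ = G^{(d)} ×₁ A₁ ⋯ ×_d A_d`, where
the core `G^{(d)} = X ×₁ P₁ᵀ ⋯ ×_d P_dᵀ` is built from the selection operators `P j` and
the (not necessarily orthonormal) factor matrices are `A j`. -/
def spApprox {d : ℕ} {I L : Fin d → ℕ} (X : Tensor d I)
    (P : ∀ j, Matrix (Fin (I j)) (Fin (L j)) ℝ)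
    (A : ∀ j, Matrix (Fin (I j)) (Fin (L j)) ℝ) : Tensor d I :=
  Tensor.multiMul (stCore X P d) fun k =>
    Matrix.reindex (Equiv.refl _) (finCongr (stDims_lt k.isLt).symm) (A k)

end

noncomputable section AuxSplitting

namespace Tensor
variable {d : ℕ} {I : Fin d → ℕ}

def ip (X Y : Tensor d I) : ℝ := ∑ i, X i * Y i

lemma frobSq_nonneg (X : Tensor d I) : 0 ≤ frobSq X :=
  Finset.sum_nonneg fun _ _ => sq_nonneg _

lemma frobNorm_sq (X : Tensor d I) : frobNorm X ^ 2 = frobSq X :=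
  Real.sq_sqrt (frobSq_nonneg X)

lemma modeMul_sub (X Y : Tensor d I) (j : Fin d) (A : Matrix (Fin (I j)) (Fin (I j)) ℝ) :
    modeMul (X - Y) j A = modeMul X j A - modeMul Y j A := by
  funext i
  simp [modeMul, mul_sub, Finset.sum_sub_distrib]

lemma modeMul_modeMul_same (X : Tensor d I) (j : Fin d)
    (A B : Matrix (Fin (I j)) (Fin (I j)) ℝ) :
    modeMul (modeMul X j A) j B = modeMul X j (B * A) := by
  funext i
  simp only [modeMul, Matrix.mul_apply, Function.update_self, Function.update_idem,
    Finset.sum_mul, Finset.mul_sum]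
  rw [Finset.sum_comm]
  exact Finset.sum_congr rfl fun m _ => Finset.sum_congr rfl fun n _ => by ring

lemma modeMul_comm (X : Tensor d I) {i j : Fin d} (hij : i ≠ j)
    (A : Matrix (Fin (I i)) (Fin (I i)) ℝ) (B : Matrix (Fin (I j)) (Fin (I j)) ℝ) :
    modeMul (modeMul X i A) j B = modeMul (modeMul X j B) i A := by
  funext x
  simp only [modeMul, Finset.mul_sum, Function.update_of_ne hij,
    Function.update_of_ne hij.symm, Function.update_comm hij.symm]
  rw [Finset.sum_comm]
  exact Finset.sum_congr rfl fun m _ => Finset.sum_congr rfl fun n _ => by ring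

lemma ip_modeMul (X Y : Tensor d I) (j : Fin d) (A : Matrix (Fin (I j)) (Fin (I j)) ℝ) :
    ip (modeMul X j A) Y = ip X (modeMul Y j Aᵀ) := by
  have hinv : Function.Involutive (fun p : (∀ j', Fin (I j')) × Fin (I j) =>
      (Function.update p.1 j p.2, p.1 j)) := by
    rintro ⟨i, m⟩
    simp [Function.update_idem, Function.update_self, Function.update_eq_self]
  calc ip (modeMul X j A) Y
      = ∑ p : (∀ j', Fin (I j')) × Fin (I j),
          A (p.1 j) p.2 * X (Function.update p.1 j p.2) * Y p.1 := by
        rw [Fintype.sum_prod_type]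
        simp only [ip, modeMul, Finset.sum_mul]
    _ = ∑ p : (∀ j', Fin (I j')) × Fin (I j),
          X p.1 * (A p.2 (p.1 j) * Y (Function.update p.1 j p.2)) := by
        refine Fintype.sum_bijective _ hinv.bijective _ _ ?_
        rintro ⟨i, m⟩
        simp only [Function.update_self, Function.update_idem, Function.update_eq_self]
        ring
    _ = ip X (modeMul Y j Aᵀ) := by
        rw [Fintype.sum_prod_type]
        simp only [ip, modeMul, Finset.mul_sum, Matrix.transpose_apply]

lemma ip_sub_left (X Y Z : Tensor d I) : ip (X - Y) Z = ip X Z - ip Y Z := by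
  simp [ip, sub_mul, Finset.sum_sub_distrib]

lemma ip_sum_left {ι : Type*} (s : Finset ι) (f : ι → Tensor d I) (Z : Tensor d I) :
    ip (∑ i ∈ s, f i) Z = ∑ i ∈ s, ip (f i) Z := by
  simp only [ip, Finset.sum_apply, Finset.sum_mul]
  rw [Finset.sum_comm]

lemma frobSq_add (X Y : Tensor d I) :
    frobSq (X + Y) = frobSq X + frobSq Y + 2 * ip X Y := by
  simp only [frobSq, ip, Pi.add_apply, Finset.mul_sum]
  rw [← Finset.sum_add_distrib, ← Finset.sum_add_distrib]
  exact Finset.sum_congr rfl fun i _ => by ring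


variable (P : ∀ j : Fin d, Matrix (Fin (I j)) (Fin (I j)) ℝ) (X : Tensor d I)

lemma modeMulFirst_succ_lt {t : ℕ} (h : t < d) :
    modeMulFirst X P (t + 1) = modeMul (modeMulFirst X P t) ⟨t, h⟩ (P ⟨t, h⟩) := by
  rw [modeMulFirst, dif_pos h]

lemma invar (hP : ∀ j, P j * P j = P j) :
    ∀ t, ∀ i : Fin d, (i : ℕ) < t →
      modeMul (modeMulFirst X P t) i (P i) = modeMulFirst X P t := by
  intro t
  induction t with
  | zero => exact fun i hi => absurd hi (by omega)
  | succ t ih =>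
    intro i hi
    by_cases ht : t < d
    · rw [modeMulFirst_succ_lt P X ht]
      rcases Nat.lt_succ_iff_lt_or_eq.mp hi with h | h
      · have hne : (⟨t, ht⟩ : Fin d) ≠ i :=
          Fin.ne_of_val_ne (show t ≠ (i : ℕ) by omega)
        rw [modeMul_comm _ hne, ih i h]
      · have : i = ⟨t, ht⟩ := Fin.ext h
        subst this
        rw [modeMul_modeMul_same, hP]
    · rw [modeMulFirst, dif_neg ht]
      exact ih i (by omega)

lemma ip_D_zero (hP : ∀ j, P j * P j = P j) (hPt : ∀ j, (P j)ᵀ = P j)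
    {s t : ℕ} (hst : s < t) (htd : t < d) :
    ip (modeMulFirst X P s - modeMulFirst X P (s + 1))
       (modeMulFirst X P t - modeMulFirst X P (t + 1)) = 0 := by
  have hsd : s < d := by omega
  have hS : modeMulFirst X P (s + 1) =
      modeMul (modeMulFirst X P s) ⟨s, hsd⟩ (P ⟨s, hsd⟩) := modeMulFirst_succ_lt P X hsd
  have hT : modeMulFirst X P (t + 1) =
      modeMul (modeMulFirst X P t) ⟨t, htd⟩ (P ⟨t, htd⟩) := modeMulFirst_succ_lt P X htd
  have hne : (⟨s, hsd⟩ : Fin d) ≠ ⟨t, htd⟩ := Fin.ne_of_val_ne (show s ≠ t by omega)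
  rw [hS, hT]
  have hfix : modeMul (modeMulFirst X P t -
        modeMul (modeMulFirst X P t) ⟨t, htd⟩ (P ⟨t, htd⟩)) ⟨s, hsd⟩ (P ⟨s, hsd⟩) =
      modeMulFirst X P t - modeMul (modeMulFirst X P t) ⟨t, htd⟩ (P ⟨t, htd⟩) := by
    rw [modeMul_sub, modeMul_comm _ hne.symm, invar P X hP t ⟨s, hsd⟩ hst]
  have hkill : modeMul (modeMulFirst X P s -
        modeMul (modeMulFirst X P s) ⟨s, hsd⟩ (P ⟨s, hsd⟩)) ⟨s, hsd⟩ (P ⟨s, hsd⟩) = 0 := by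
    rw [modeMul_sub, modeMul_modeMul_same, hP, sub_self]
  calc ip (modeMulFirst X P s - modeMul (modeMulFirst X P s) ⟨s, hsd⟩ (P ⟨s, hsd⟩))
        (modeMulFirst X P t - modeMul (modeMulFirst X P t) ⟨t, htd⟩ (P ⟨t, htd⟩))
      = ip (modeMulFirst X P s - modeMul (modeMulFirst X P s) ⟨s, hsd⟩ (P ⟨s, hsd⟩))
          (modeMul (modeMulFirst X P t -
            modeMul (modeMulFirst X P t) ⟨t, htd⟩ (P ⟨t, htd⟩)) ⟨s, hsd⟩ ((P ⟨s, hsd⟩)ᵀ)) := by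
        rw [hPt, hfix]
    _ = ip (modeMul (modeMulFirst X P s -
            modeMul (modeMulFirst X P s) ⟨s, hsd⟩ (P ⟨s, hsd⟩)) ⟨s, hsd⟩ (P ⟨s, hsd⟩))
          (modeMulFirst X P t - modeMul (modeMulFirst X P t) ⟨t, htd⟩ (P ⟨t, htd⟩)) :=
        (ip_modeMul _ _ _ _).symm
    _ = 0 := by rw [hkill]; simp [ip]

lemma split (hP : ∀ j, P j * P j = P j) (hPt : ∀ j, (P j)ᵀ = P j) :
    ∀ t, t ≤ d →
      frobSq (X - modeMulFirst X P t) =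
        ∑ j ∈ Finset.range t,
          frobSq (modeMulFirst X P j - modeMulFirst X P (j + 1)) := by
  intro t
  induction t with
  | zero => simp [modeMulFirst, frobSq]
  | succ t ih =>
    intro ht
    have htd : t < d := by omega
    have tele : X - modeMulFirst X P t =
        ∑ s ∈ Finset.range t,
          (modeMulFirst X P s - modeMulFirst X P (s + 1)) := by
      rw [Finset.sum_range_sub' (fun s => modeMulFirst X P s)]
      rfl
    have key : ip (X - modeMulFirst X P t)
        (modeMulFirst X P t - modeMulFirst X P (t + 1)) = 0 := by
      rw [tele, ip_sum_left]
      refine Finset.sum_eq_zero fun s hs => ?_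
      exact ip_D_zero P X hP hPt (Finset.mem_range.mp hs) htd
    have hsplit : X - modeMulFirst X P (t + 1) =
        (X - modeMulFirst X P t) +
          (modeMulFirst X P t - modeMulFirst X P (t + 1)) := by
      abel
    rw [hsplit, frobSq_add, key, ih (by omega), Finset.sum_range_succ]
    ring


end Tensor

end AuxSplitting

/-- sequential error splitting for the adaptive STHOSVD: with
orthonormal-column factor matrices `A j` and intermediate tensors
`X^{(j)} = X ×₁ A₁A₁ᵀ ⋯ ×_j A_jA_jᵀ` (`X^{(0)} = X`),
`‖X − X^{(d)}‖_F² = Σ_j ‖X^{(j−1)} − X^{(j)}‖_F²`; consequently if each successive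
difference satisfies `‖X^{(j−1)} − X^{(j)}‖_F ≤ (ε/√d)‖X‖_F`, then
`‖X − X^{(d)}‖_F ≤ ε ‖X‖_F`. -/
theorem adaptive_sthosvd_error_splitting
    (d : ℕ) (I k : Fin d → ℕ) (X : Tensor d I)
    (A : ∀ j, Matrix (Fin (I j)) (Fin (k j)) ℝ)
    (hortho : ∀ j, (A j)ᵀ * A j = 1) :
    Tensor.frobSq (X - Tensor.modeMulFirst X (fun j => A j * (A j)ᵀ) d) =
      (∑ j : Fin d, Tensor.frobSq
        (Tensor.modeMulFirst X (fun j => A j * (A j)ᵀ) (j : ℕ) -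
          Tensor.modeMulFirst X (fun j => A j * (A j)ᵀ) ((j : ℕ) + 1))) ∧
    ∀ ε : ℝ, 0 < ε →
      (∀ j : Fin d,
        Tensor.frobNorm
          (Tensor.modeMulFirst X (fun j => A j * (A j)ᵀ) (j : ℕ) -
            Tensor.modeMulFirst X (fun j => A j * (A j)ᵀ) ((j : ℕ) + 1)) ≤
          ε / Real.sqrt d * Tensor.frobNorm X) →
      Tensor.frobNorm (X - Tensor.modeMulFirst X (fun j => A j * (A j)ᵀ) d) ≤
        ε * Tensor.frobNorm X := by
  have hP : ∀ j : Fin d, (A j * (A j)ᵀ) * (A j * (A j)ᵀ) = A j * (A j)ᵀ := by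
    intro j
    rw [Matrix.mul_assoc, ← Matrix.mul_assoc (A j)ᵀ, hortho j, Matrix.one_mul]
  have hPt : ∀ j : Fin d, (A j * (A j)ᵀ)ᵀ = A j * (A j)ᵀ := by
    intro j
    rw [Matrix.transpose_mul, Matrix.transpose_transpose]
  have main := Tensor.split (fun j => A j * (A j)ᵀ) X hP hPt d le_rfl
  have h1 : Tensor.frobSq (X - Tensor.modeMulFirst X (fun j => A j * (A j)ᵀ) d) =
      ∑ j : Fin d, Tensor.frobSq
        (Tensor.modeMulFirst X (fun j => A j * (A j)ᵀ) (j : ℕ) -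
          Tensor.modeMulFirst X (fun j => A j * (A j)ᵀ) ((j : ℕ) + 1)) := by
    rw [main, ← Fin.sum_univ_eq_sum_range (fun j => Tensor.frobSq
      (Tensor.modeMulFirst X (fun j => A j * (A j)ᵀ) j -
        Tensor.modeMulFirst X (fun j => A j * (A j)ᵀ) (j + 1))) d]
  refine ⟨h1, ?_⟩
  intro ε hε hb
  have hnn : 0 ≤ Tensor.frobNorm X := Real.sqrt_nonneg _
  by_cases hd : d = 0
  · subst hd
    have hz : X - Tensor.modeMulFirst X (fun j => A j * (A j)ᵀ) 0 = 0 := by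
      simp [Tensor.modeMulFirst]
    rw [hz]
    have hz2 : Tensor.frobNorm (0 : Tensor 0 I) = 0 := by
      simp [Tensor.frobNorm, Tensor.frobSq]
    rw [hz2]
    exact mul_nonneg hε.le hnn
  · have hd0 : (0 : ℝ) < d := by
      exact_mod_cast Nat.pos_of_ne_zero hd
    have hle : ∀ j : Fin d, Tensor.frobSq
        (Tensor.modeMulFirst X (fun j => A j * (A j)ᵀ) (j : ℕ) -
          Tensor.modeMulFirst X (fun j => A j * (A j)ᵀ) ((j : ℕ) + 1)) ≤
        (ε / Real.sqrt d * Tensor.frobNorm X) ^ 2 := by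
      intro j
      calc Tensor.frobSq _ = Tensor.frobNorm
            (Tensor.modeMulFirst X (fun j => A j * (A j)ᵀ) (j : ℕ) -
              Tensor.modeMulFirst X (fun j => A j * (A j)ᵀ) ((j : ℕ) + 1)) ^ 2 :=
          (Tensor.frobNorm_sq _).symm
        _ ≤ (ε / Real.sqrt d * Tensor.frobNorm X) ^ 2 :=
          pow_le_pow_left₀ (Real.sqrt_nonneg _) (hb j) 2
    have hsum : Tensor.frobSq (X - Tensor.modeMulFirst X (fun j => A j * (A j)ᵀ) d) ≤
        (d : ℝ) * (ε / Real.sqrt d * Tensor.frobNorm X) ^ 2 := by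
      rw [h1]
      calc (∑ j : Fin d, Tensor.frobSq
            (Tensor.modeMulFirst X (fun j => A j * (A j)ᵀ) (j : ℕ) -
              Tensor.modeMulFirst X (fun j => A j * (A j)ᵀ) ((j : ℕ) + 1)))
          ≤ ∑ _j : Fin d, (ε / Real.sqrt d * Tensor.frobNorm X) ^ 2 :=
            Finset.sum_le_sum fun j _ => hle j
        _ = (d : ℝ) * (ε / Real.sqrt d * Tensor.frobNorm X) ^ 2 := by
            rw [Finset.sum_const, Finset.card_univ, Fintype.card_fin, nsmul_eq_mul]
    have heq : (d : ℝ) * (ε / Real.sqrt d * Tensor.frobNorm X) ^ 2 =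
        (ε * Tensor.frobNorm X) ^ 2 := by
      rw [mul_pow, div_pow, Real.sq_sqrt hd0.le]
      have hdne : (d : ℝ) ≠ 0 := ne_of_gt hd0
      field_simp
    have h2 : Tensor.frobSq (X - Tensor.modeMulFirst X (fun j => A j * (A j)ᵀ) d) ≤
        (ε * Tensor.frobNorm X) ^ 2 := heq ▸ hsum
    have h3 := Real.sqrt_le_sqrt h2
    rw [Real.sqrt_sq (mul_nonneg hε.le hnn)] at h3
    exact h3
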